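/- For a depolarizing channel parameter function p_total(k,m) = 1 - (1 - (2/15)((15/2)p)^{2^k})^m with fixed 0 < p < 2/15 and fixed ε ∈ (0,1], the minimal number of parallel chains n = 5^k needed to guarantee p_total < ε grows at most as O((ln m)^3) as m → ∞. -/

import Mathlib

/-!
Put `q = 15p/2 ∈ (0,1)`. By Bernoulli's inequality `p_total(k,m) ≤ m · (2/15) q^(2^k)`, which is
below `ε` as soon as `2^k > log (2m/(15ε)) / (-log q)`. Taking the least such power of two gives
`2^k = O(log m)`, hence `5^k ≤ 8^k = (2^k)^3 = O((log m)^3)`.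
-/

open Real

lemma one_sub_one_sub_pow_le_mul {t : ℝ} (ht : t ≤ 2) (m : ℕ) : 1 - (1 - t) ^ m ≤ m * t := by
  linarith [one_add_mul_sub_le_pow (a := 1 - t) (by linarith) m]

lemma pow_lt_of_log_inv_div_lt {q δ : ℝ} {n : ℕ} (hq0 : 0 < q) (hq1 : q < 1) (hδ : 0 < δ)
    (h : log δ⁻¹ / -log q < n) : q ^ n < δ := by
  rw [div_lt_iff₀ (neg_pos.2 (log_neg hq0 hq1)), log_inv] at h
  rw [← log_lt_log_iff (pow_pos hq0 n) hδ, log_pow]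
  linarith

lemma exists_two_pow_between {x : ℝ} (hx : 1 ≤ x) : ∃ k : ℕ, x < 2 ^ k ∧ (2 : ℝ) ^ k ≤ 2 * x := by
  have hfloor : ⌊x⌋₊ ≠ 0 := (Nat.floor_pos.2 hx).ne'
  refine ⟨Nat.log 2 ⌊x⌋₊ + 1, ?_, ?_⟩
  · have : ⌊x⌋₊ + 1 ≤ 2 ^ (Nat.log 2 ⌊x⌋₊ + 1) := Nat.lt_pow_succ_log_self one_lt_two _
    calc x < ⌊x⌋₊ + 1 := Nat.lt_floor_add_one x
      _ ≤ 2 ^ (Nat.log 2 ⌊x⌋₊ + 1) := by exact_mod_cast this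
  · have : 2 ^ Nat.log 2 ⌊x⌋₊ ≤ ⌊x⌋₊ := Nat.pow_log_le_self 2 hfloor
    calc (2 : ℝ) ^ (Nat.log 2 ⌊x⌋₊ + 1) = 2 * (2 ^ Nat.log 2 ⌊x⌋₊ : ℕ) := by push_cast; ring
      _ ≤ 2 * ⌊x⌋₊ := by gcongr
      _ ≤ 2 * x := by gcongr; exact Nat.floor_le (by linarith)

lemma log_mul_le_mul_log {c m : ℝ} (hc : 0 < c) (hm : 2 ≤ m) :
    log (c * m) ≤ (|log c| / log 2 + 1) * log m := by
  have hlog2 : 0 < log 2 := log_pos one_lt_two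
  have hlogm : log 2 ≤ log m := log_le_log two_pos hm
  have : |log c| ≤ |log c| / log 2 * log m := by
    rw [div_mul_eq_mul_div, le_div_iff₀ hlog2]
    exact mul_le_mul_of_nonneg_left hlogm (abs_nonneg _)
  rw [log_mul hc.ne' (by linarith), add_mul, one_mul]
  linarith [le_abs_self (log c)]

lemma exists_max_log_mul_div_le_mul_log {c l : ℝ} (hc : 0 < c) (hl : 0 < l) :
    ∃ a > 0, ∀ m : ℝ, 2 ≤ m → max (log (c * m) / l) 1 ≤ a * log m := by
  have hlog2 : 0 < log 2 := log_pos one_lt_two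
  set b := (|log c| / log 2 + 1) / l
  have hb : 0 ≤ b := by positivity
  refine ⟨b + 1 / log 2, by positivity, fun m hm => ?_⟩
  have hlogm : log 2 ≤ log m := log_le_log two_pos hm
  have hone : 1 ≤ 1 / log 2 * log m := by rw [one_div_mul_eq_div, le_div_iff₀ hlog2]; linarith
  have hdiv : log (c * m) / l ≤ b * log m := by
    rw [div_le_iff₀ hl, div_mul_eq_mul_div, div_mul_cancel₀ _ hl.ne']
    exact log_mul_le_mul_log hc hm
  have : 0 ≤ log m := by linarith
  rw [add_mul]
  exact max_le (by nlinarith) (by nlinarith)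

lemma five_pow_le_cube {k : ℕ} {y : ℝ} (h : (2 : ℝ) ^ k ≤ y) : (5 : ℝ) ^ k ≤ y ^ 3 :=
  calc (5 : ℝ) ^ k ≤ (2 ^ 3) ^ k := by gcongr; norm_num
    _ = (2 ^ k) ^ 3 := by rw [← pow_mul, ← pow_mul, mul_comm]
    _ ≤ y ^ 3 := by gcongr

theorem chains_polylog_general (p ε : ℝ)
    (hp : 0 < p) (hp' : p < 2/15) (hε : 0 < ε) :
    ∃ C : ℝ, 0 < C ∧ ∀ m : ℕ, 2 ≤ m → ∃ k : ℕ,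
      1 - (1 - (2/15) * ((15/2) * p) ^ (2 ^ k))^m < ε ∧
      (5:ℝ)^k ≤ C * (Real.log m)^3 := by
  set q := (15/2) * p
  have hq0 : 0 < q := by positivity
  have hq1 : q < 1 := by simp only [q]; linarith
  set c := 2 / (15 * ε)
  obtain ⟨a, ha, hmax⟩ :=
    exists_max_log_mul_div_le_mul_log (by positivity : 0 < c) (neg_pos.2 (log_neg hq0 hq1))
  refine ⟨8 * a ^ 3, by positivity, fun m hm => ?_⟩
  have hm2 : (2 : ℝ) ≤ m := by exact_mod_cast hm
  obtain ⟨k, hk, hk2⟩ := exists_two_pow_between (le_max_right (log (c * m) / -log q) 1)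
  have hqk : q ^ 2 ^ k < (c * m)⁻¹ := by
    refine pow_lt_of_log_inv_div_lt hq0 hq1 (by positivity) ?_
    rw [inv_inv]
    exact_mod_cast (le_max_left _ _).trans_lt hk
  refine ⟨k, ?_, ?_⟩
  · calc 1 - (1 - (2/15) * q ^ 2 ^ k) ^ m ≤ m * ((2/15) * q ^ 2 ^ k) :=
          one_sub_one_sub_pow_le_mul (by nlinarith [pow_le_one₀ hq0.le hq1.le (n := 2 ^ k)]) m
      _ < m * ((2/15) * (c * m)⁻¹) := by gcongr
      _ = ε := by simp only [c]; field_simp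
  · calc (5 : ℝ) ^ k ≤ (2 * (a * log m)) ^ 3 := five_pow_le_cube (hk2.trans (by linarith [hmax m hm2]))
      _ = 8 * a ^ 3 * log m ^ 3 := by ring

/-- With `p_total(k,m) = 1 - (1 - (2/15)((15/2)p)^(2^k))^m` for fixed
`0 < p < 2/15` and fixed `ε ∈ (0,1]`, the number of parallel chains `n = 5^k`
needed to guarantee `p_total < ε` grows at most as `O((ln m)³)` as `m → ∞`. -/
theorem chains_polylog (p ε : ℝ)
    (hp : 0 < p) (hp' : p < 2/15) (hε : 0 < ε) (hε1 : ε ≤ 1) :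
    ∃ C : ℝ, 0 < C ∧ ∀ m : ℕ, 2 ≤ m → ∃ k : ℕ,
      1 - (1 - (2/15) * ((15/2) * p) ^ (2 ^ k))^m < ε ∧
      (5:ℝ)^k ≤ C * (Real.log m)^3 :=
  chains_polylog_general p ε hp hp' hε
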